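/- arXiv:1008.4636 — 2 statements merged into one kernel-verified Lean document; each statement's English description precedes it below -/
import Mathlib

section
/- Let ρ₀, ρ₁ be density operators on a finite-dimensional complex Hilbert space. Then the maximum over all two-outcome measurements {P₀, P₁} of the quantity 1/2 + (1/4)⟨P₀ - P₁, ρ₀ - ρ₁⟩ equals 1/2 + (1/4)‖ρ₀ - ρ₁‖₁ (Helstrom's bound). -/
/-!
Write `X = ρ₀ - ρ₁ = X⁺ - X⁻` with `X⁺, X⁻ ⪰ 0` and `|X| = X⁺ + X⁻`, so that `‖X‖₁ = Tr |X|`.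
For a measurement `P₀ + P₁ = 1`,
`Tr |X| - ⟨P₀ - P₁, X⟩ = 2 Tr (P₀ X⁻) + 2 Tr (P₁ X⁺) ≥ 0`,
as the trace of a product of positive semidefinite matrices is nonnegative. Equality holds for the
projection `P₀` onto the nonnegative spectral subspace of `X` and `P₁ = 1 - P₀`, since then
`(P₀ - P₁) X = |X|`.
-/

open Matrix ComplexOrder

/-- The trace norm of a matrix: the sum of its singular values, i.e. `Tr √(XᴴX)`. -/
noncomputable def traceNorm {n : ℕ} (X : Matrix (Fin n) (Fin n) ℂ) : ℝ :=
  (((Matrix.posSemidef_conjTranspose_mul_self X).1.eigenvectorUnitary.1 *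
    diagonal (((↑) : ℝ → ℂ) ∘ (√·) ∘ (Matrix.posSemidef_conjTranspose_mul_self X).1.eigenvalues) *
    (star (Matrix.posSemidef_conjTranspose_mul_self X).1.eigenvectorUnitary :
      Matrix (Fin n) (Fin n) ℂ)).trace).re

namespace Matrix

open scoped MatrixOrder

variable {m : Type*} [Fintype m] [DecidableEq m]

lemma PosSemidef.trace_mul_nonneg {A B : Matrix m m ℂ} (hA : A.PosSemidef) (hB : B.PosSemidef) :
    0 ≤ (A * B).trace := by
  have hS : (CFC.sqrt B)ᴴ = CFC.sqrt B := (CFC.sqrt_nonneg B).posSemidef.isHermitian.eq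
  have := (hA.conjTranspose_mul_mul_same (CFC.sqrt B)).trace_nonneg
  rwa [hS, trace_mul_cycle, CFC.sqrt_mul_sqrt_self B hB.nonneg, trace_mul_comm] at this

lemma trace_sub_mul_le_trace_add_mul_abs {P₀ P₁ X : Matrix m m ℂ} (hP₀ : P₀.PosSemidef)
    (hP₁ : P₁.PosSemidef) (hX : X.IsHermitian) :
    ((P₀ - P₁) * X).trace ≤ ((P₀ + P₁) * CFC.abs X).trace := by
  have hgap : (P₀ + P₁) * CFC.abs X - (P₀ - P₁) * X = 2 • (P₀ * X⁻ + P₁ * X⁺) := by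
    rw [← CFC.posPart_add_negPart X hX]
    conv_lhs => enter [2, 2]; rw [← CFC.posPart_sub_negPart X hX]
    noncomm_ring
  rw [← sub_nonneg, ← trace_sub, hgap, trace_smul, trace_add]
  have := add_nonneg (hP₀.trace_mul_nonneg (CFC.negPart_nonneg X).posSemidef)
    (hP₁.trace_mul_nonneg (CFC.posPart_nonneg X).posSemidef)
  positivity

lemma IsHermitian.exists_measurement_mul_eq_abs {X : Matrix m m ℂ} (hX : X.IsHermitian) :
    ∃ P₀ P₁ : Matrix m m ℂ, P₀.PosSemidef ∧ P₁.PosSemidef ∧ P₀ + P₁ = 1 ∧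
      (P₀ - P₁) * X = CFC.abs X := by
  set f : ℝ → ℝ := fun x ↦ if 0 ≤ x then 1 else 0
  have hcont (g : ℝ → ℝ) : ContinuousOn g (spectrum ℝ X) := X.finite_real_spectrum.continuousOn g
  refine ⟨cfc f X, cfc (fun x ↦ 1 - f x) X, ?_, ?_, ?_, ?_⟩
  · exact (cfc_nonneg fun x _ ↦ by simp only [f]; split_ifs <;> norm_num).posSemidef
  · exact (cfc_nonneg fun x _ ↦ by simp only [f]; split_ifs <;> norm_num).posSemidef
  · rw [← cfc_add (hf := hcont _) (hg := hcont _)]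
    simpa using cfc_const_one ℝ X hX.isSelfAdjoint
  · conv_lhs => enter [2]; rw [← cfc_id' ℝ X hX.isSelfAdjoint]
    rw [← cfc_sub (hf := hcont _) (hg := hcont _), ← cfc_mul (hf := hcont _) (hg := hcont _),
      CFC.abs_eq_cfc_norm X hX]
    refine cfc_congr fun x _ ↦ ?_
    simp only [f, Real.norm_eq_abs]
    split_ifs with hx
    · rw [abs_of_nonneg hx]; ring
    · rw [abs_of_neg (not_le.1 hx)]; ring

end Matrix

open scoped MatrixOrder in
lemma traceNorm_eq_re_trace_abs {n : ℕ} (X : Matrix (Fin n) (Fin n) ℂ) :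
    traceNorm X = (CFC.abs X).trace.re := by
  have hXX := posSemidef_conjTranspose_mul_self X
  rw [CFC.abs, star_eq_conjTranspose, CFC.sqrt_eq_real_sqrt _ hXX.nonneg, cfcₙ_eq_cfc,
    hXX.isHermitian.cfc_eq]
  rfl

theorem stmt2_general {n : ℕ} (ρ₀ ρ₁ : Matrix (Fin n) (Fin n) ℂ)
    (h₀ : ρ₀.PosSemidef) (h₁ : ρ₁.PosSemidef) :
    IsGreatest {p : ℝ | ∃ P₀ P₁ : Matrix (Fin n) (Fin n) ℂ,
        P₀.PosSemidef ∧ P₁.PosSemidef ∧ P₀ + P₁ = 1 ∧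
        p = 1/2 + (1/4) * (((P₀ - P₁) * (ρ₀ - ρ₁)).trace).re}
      (1/2 + (1/4) * traceNorm (ρ₀ - ρ₁)) := by
  have hX : (ρ₀ - ρ₁).IsHermitian := h₀.isHermitian.sub h₁.isHermitian
  rw [traceNorm_eq_re_trace_abs]
  constructor
  · obtain ⟨P₀, P₁, hP₀, hP₁, hsum, hmul⟩ := hX.exists_measurement_mul_eq_abs
    exact ⟨P₀, P₁, hP₀, hP₁, hsum, by rw [hmul]⟩
  · rintro p ⟨P₀, P₁, hP₀, hP₁, hsum, rfl⟩
    have hle := trace_sub_mul_le_trace_add_mul_abs hP₀ hP₁ hX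
    rw [hsum, Matrix.one_mul] at hle
    gcongr

/-- Helstrom's bound: for density operators `ρ₀, ρ₁`, the maximum of
`1/2 + (1/4)⟨P₀ - P₁, ρ₀ - ρ₁⟩` over all two-outcome measurements `{P₀, P₁}`
equals `1/2 + (1/4)‖ρ₀ - ρ₁‖₁`. -/
theorem stmt2 {n : ℕ} (ρ₀ ρ₁ : Matrix (Fin n) (Fin n) ℂ)
    (h₀ : ρ₀.PosSemidef) (h₁ : ρ₁.PosSemidef)
    (t₀ : ρ₀.trace = 1) (t₁ : ρ₁.trace = 1) :
    IsGreatest {p : ℝ | ∃ P₀ P₁ : Matrix (Fin n) (Fin n) ℂ,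
        P₀.PosSemidef ∧ P₁.PosSemidef ∧ P₀ + P₁ = 1 ∧
        p = 1/2 + (1/4) * (((P₀ - P₁) * (ρ₀ - ρ₁)).trace).re}
      (1/2 + (1/4) * traceNorm (ρ₀ - ρ₁)) :=
  stmt2_general ρ₀ ρ₁ h₀ h₁
end

section
/- Let S₀ and S₁ be nonempty compact convex subsets of a finite-dimensional real inner product space V, let N be a norm on V with dual norm N*, and let d = min{N(s₀ - s₁) : s₀ ∈ S₀, s₁ ∈ S₁} and suppose d > 0. Then there exists a vector h ∈ V with N*(h) ≤ 1 such that ⟨h, s₀ - s₁⟩ ≥ d for all s₀ ∈ S₀, s₁ ∈ S₁. -/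
/-!
The `N`-ball of radius `d` is convex, open (`N` is convex, hence continuous in finite dimension),
and misses the convex set `S₀ - S₁`, so Hahn–Banach
gives a functional `g` and a level `u` with `g < u` on the ball and `u ≤ g` on `S₀ - S₁`; since the
ball contains `0`, `u > 0`. Rescaling `g` by `d / u` puts `S₀ - S₁` at level `≥ d`, and homogeneity
of `N` turns `g < u` on the ball into `N*(h) ≤ 1`. The Riesz representative of the rescaled
functional is the required `h`.
-/

open scoped Pointwise

namespace Seminorm

variable {E : Type*} [AddCommGroup E] [Module ℝ E]

theorem mul_le_of_forall_mem_ball_lt (p : Seminorm ℝ E) (f : E →ₗ[ℝ] ℝ) {r u : ℝ} (hr : 0 < r)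
    (h : ∀ x ∈ p.ball 0 r, f x < u) {y : E} (hy : p y ≤ 1) : r * f y ≤ u := by
  by_contra! hlt
  have hu : 0 < u := by simpa using h 0 (p.mem_ball_self hr)
  have hfy : 0 < f y := pos_of_mul_pos_right (hu.trans hlt) hr.le
  -- `t • y` lies in the ball but `f (t • y) = u`.
  set t := u / f y
  have ht : 0 ≤ t := by positivity
  have hmem : t • y ∈ p.ball 0 r := by
    rw [mem_ball_zero, map_smul_eq_mul, Real.norm_of_nonneg ht]
    calc t * p y ≤ t := mul_le_of_le_one_right ht hy
      _ < r := (div_lt_iff₀ hfy).2 hlt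
  have := h _ hmem
  rw [map_smul, smul_eq_mul, div_mul_cancel₀ _ hfy.ne'] at this
  exact lt_irrefl _ this

theorem exists_dual_le_one_of_disjoint_ball [TopologicalSpace E] [IsTopologicalAddGroup E]
    [ContinuousSMul ℝ E] (p : Seminorm ℝ E) (hp : Continuous p) {D : Set E} (hD : Convex ℝ D)
    {r : ℝ} (hr : 0 < r) (hdisj : Disjoint (p.ball 0 r) D) :
    ∃ f : StrongDual ℝ E, (∀ y, p y ≤ 1 → f y ≤ 1) ∧ ∀ x ∈ D, r ≤ f x := by
  have hopen : IsOpen (p.ball 0 r) := by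
    rw [ball_zero_eq_preimage_ball]
    exact Metric.isOpen_ball.preimage hp
  obtain ⟨g, u, hlt, hle⟩ := geometric_hahn_banach_open (p.convex_ball 0 r) hopen hD hdisj
  have hu : 0 < u := by simpa using hlt 0 (p.mem_ball_self hr)
  refine ⟨(r / u) • g, fun y hy => ?_, fun x hx => ?_⟩
  · rw [smul_apply, smul_eq_mul, div_mul_eq_mul_div, div_le_one hu]
    exact p.mul_le_of_forall_mem_ball_lt g.toLinearMap hr hlt hy
  · calc r = r / u * u := (div_mul_cancel₀ r hu.ne').symm
      _ ≤ r / u * g x := mul_le_mul_of_nonneg_left (hle x hx) (by positivity)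

theorem continuous_of_finiteDimensional {V : Type*} [NormedAddCommGroup V] [NormedSpace ℝ V]
    [FiniteDimensional ℝ V] (p : Seminorm ℝ V) : Continuous p :=
  continuousOn_univ.1 (p.convexOn.continuousOn isOpen_univ)

end Seminorm

theorem stmt8_general {V : Type*} [NormedAddCommGroup V] [InnerProductSpace ℝ V]
    [FiniteDimensional ℝ V] (S₀ S₁ : Set V)
    (h₀conv : Convex ℝ S₀) (h₁conv : Convex ℝ S₁)
    (N : V → ℝ)
    (hN_tri : ∀ x y, N (x + y) ≤ N x + N y)
    (hN_smul : ∀ (a : ℝ) (x), N (a • x) = |a| * N x)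
    (d : ℝ) (hd : 0 < d)
    (hdmin : IsLeast {r : ℝ | ∃ s₀ ∈ S₀, ∃ s₁ ∈ S₁, r = N (s₀ - s₁)} d) :
    ∃ h : V, (∀ y, N y ≤ 1 → inner ℝ h y ≤ (1 : ℝ)) ∧
      ∀ s₀ ∈ S₀, ∀ s₁ ∈ S₁, d ≤ (inner ℝ h (s₀ - s₁) : ℝ) := by
  let p : Seminorm ℝ V := Seminorm.of N hN_tri hN_smul
  have hdisj : Disjoint (p.ball 0 d) (S₀ - S₁) := by
    rw [Set.disjoint_left]
    rintro _ hx ⟨s₀, hs₀, s₁, hs₁, rfl⟩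
    exact (Seminorm.mem_ball_zero p).1 hx |>.not_ge (hdmin.2 ⟨s₀, hs₀, s₁, hs₁, rfl⟩)
  obtain ⟨f, hf_le, hf_ge⟩ := p.exists_dual_le_one_of_disjoint_ball
    p.continuous_of_finiteDimensional (h₀conv.sub h₁conv) hd hdisj
  refine ⟨(InnerProductSpace.toDual ℝ V).symm f, fun y hy => ?_, fun s₀ hs₀ s₁ hs₁ => ?_⟩
  · rw [InnerProductSpace.toDual_symm_apply]
    exact hf_le y hy
  · rw [InnerProductSpace.toDual_symm_apply]
    exact hf_ge _ (Set.sub_mem_sub hs₀ hs₁)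

/-- Separation theorem core of the distinguishability theorem: for nonempty compact convex
sets `S₀, S₁` in a finite-dimensional real inner product space and a norm `N` with minimal
distance `d = min{N(s₀ - s₁)} > 0`, there is `h` with dual norm `N*(h) ≤ 1` such that
`⟨h, s₀ - s₁⟩ ≥ d` for all `s₀ ∈ S₀`, `s₁ ∈ S₁`. -/
theorem stmt8 {V : Type*} [NormedAddCommGroup V] [InnerProductSpace ℝ V]
    [FiniteDimensional ℝ V] (S₀ S₁ : Set V)
    (h₀ne : S₀.Nonempty) (h₁ne : S₁.Nonempty)
    (h₀cpt : IsCompact S₀) (h₁cpt : IsCompact S₁)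
    (h₀conv : Convex ℝ S₀) (h₁conv : Convex ℝ S₁)
    (N : V → ℝ)
    (hN_tri : ∀ x y, N (x + y) ≤ N x + N y)
    (hN_smul : ∀ (a : ℝ) (x), N (a • x) = |a| * N x)
    (hN_pos : ∀ x, N x = 0 → x = 0)
    (d : ℝ) (hd : 0 < d)
    (hdmin : IsLeast {r : ℝ | ∃ s₀ ∈ S₀, ∃ s₁ ∈ S₁, r = N (s₀ - s₁)} d) :
    ∃ h : V, (∀ y, N y ≤ 1 → inner ℝ h y ≤ (1 : ℝ)) ∧
      ∀ s₀ ∈ S₀, ∀ s₁ ∈ S₁, d ≤ (inner ℝ h (s₀ - s₁) : ℝ) :=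
  stmt8_general S₀ S₁ h₀conv h₁conv N hN_tri hN_smul d hd hdmin
end
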